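/- arXiv:0711.1682 — 5 statements merged into one kernel-verified Lean document; each statement's English description precedes it below -/
import Mathlib

section
/- Let heap-ordered trees T₁ (containing v) and T₂ (containing w) be merged by interleaving the root paths of v and w, yielding tree T. If x and y are both in T₁, then nca_T(x,y) = min(T₁[x,y]). If x is in T₁ and y is in T₂, then nca_T(x,y) = min(T₁[x,v] ∪ T₂[y,w]). -/
/-- `prel p a b` : `b` is the parent of `a`. -/
def prel (p : ℤ → Option ℤ) (a b : ℤ) : Prop := p a = some b

/-- `anc p a b` : `b` is an ancestor of `a` (including `a` itself). -/
def anc (p : ℤ → Option ℤ) (a b : ℤ) : Prop := Relation.ReflTransGen (prel p) a b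

/-- `IsNca p x y u` : `u` is the nearest common ancestor of `x` and `y`. -/
def IsNca (p : ℤ → Option ℤ) (x y u : ℤ) : Prop :=
  anc p x u ∧ anc p y u ∧ ∀ z, anc p x z → anc p y z → anc p u z

/-- `pathSet p x y u` : node set of the undirected path between `x` and `y`,
`u` being their nearest common ancestor. -/
def pathSet (p : ℤ → Option ℤ) (x y u : ℤ) : Set ℤ :=
  {z | (anc p x z ∧ anc p z u) ∨ (anc p y z ∧ anc p z u)}


namespace MergeNca

lemma anc_le {p : ℤ → Option ℤ} (hheap : ∀ a b : ℤ, p a = some b → b < a)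
    {x z : ℤ} (h : anc p x z) : z ≤ x := by
  induction h with
  | refl => exact le_refl _
  | tail _ h₂ ih => exact le_trans (le_of_lt (hheap _ _ h₂)) ih

lemma anc_antisymm {p : ℤ → Option ℤ} (hheap : ∀ a b : ℤ, p a = some b → b < a)
    {a b : ℤ} (h1 : anc p a b) (h2 : anc p b a) : a = b :=
  le_antisymm (anc_le hheap h2) (anc_le hheap h1)

lemma anc_mem {p : ℤ → Option ℤ} {S : Set ℤ}
    (hdom : ∀ a b : ℤ, p a = some b → a ∈ S ∧ b ∈ S)
    {x z : ℤ} (hx : x ∈ S) (h : anc p x z) : z ∈ S := by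
  induction h with
  | refl => exact hx
  | tail _ h₂ ih => exact (hdom _ _ h₂).2

lemma anc_comp {p : ℤ → Option ℤ} {x a b : ℤ} (ha : anc p x a) (hb : anc p x b) :
    anc p a b ∨ anc p b a := by
  revert hb
  induction ha using Relation.ReflTransGen.head_induction_on with
  | refl => exact fun hb => Or.inl hb
  | @head t c h₁ h₂ ih =>
    intro hb
    rcases hb.cases_head with rfl | ⟨d, hd, hdb⟩
    · exact Or.inr (Relation.ReflTransGen.head h₁ h₂)
    · have hdc : d = c := by
        have h₁' : p t = some c := h₁
        have hd' : p t = some d := hd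
        rw [h₁'] at hd'; exact (Option.some.inj hd').symm
      exact ih (hdc ▸ hdb)

section Generic

variable {S : Set ℤ} {p q : ℤ → Option ℤ} {v : ℤ} {P : ℤ → Prop}

/-- descending along the merged path -/
lemma ancq_P
    (hqP' : ∀ t, P t → (∀ b : ℤ, q t = some b ↔ (P b ∧ b < t ∧
        ∀ z : ℤ, P z → z < t → z ≤ b)) ∧ (q t = none ↔ ∀ z : ℤ, P z → ¬ z < t)) :
    ∀ n : ℕ, ∀ t z : ℤ, P t → P z → z ≤ t → (t - z).toNat ≤ n → anc q t z := by
  intro n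
  induction n with
  | zero =>
    intro t z _ _ hle hn
    have ht : t = z := by omega
    rw [ht]
    exact Relation.ReflTransGen.refl
  | succ n ih =>
    intro t z hPt hPz hle hn
    rcases eq_or_lt_of_le hle with rfl | hlt
    · exact Relation.ReflTransGen.refl
    · cases hqt : q t with
      | none => exact absurd hlt (((hqP' t hPt).2.mp hqt) z hPz)
      | some b =>
        obtain ⟨hPb, hbt, hmax⟩ := ((hqP' t hPt).1 b).mp hqt
        have hzb : z ≤ b := hmax z hPz hlt
        exact Relation.ReflTransGen.head hqt (ih b z hPb hPz hzb (by omega))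

lemma ancq_P' (hqP' : ∀ t, P t → (∀ b : ℤ, q t = some b ↔ (P b ∧ b < t ∧
        ∀ z : ℤ, P z → z < t → z ≤ b)) ∧ (q t = none ↔ ∀ z : ℤ, P z → ¬ z < t))
    {t z : ℤ} (hPt : P t) (hPz : P z) (hle : z ≤ t) : anc q t z :=
  ancq_P hqP' (t - z).toNat t z hPt hPz hle le_rfl

/-- walking within the tree before hitting the merged path -/
lemma ancq_path
    (hheap : ∀ a b : ℤ, p a = some b → b < a)
    (hdom : ∀ a b : ℤ, p a = some b → a ∈ S ∧ b ∈ S)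
    (hq : ∀ x ∈ S, ¬ anc p v x → q x = p x)
    {x a : ℤ} (hx : x ∈ S)
    (hfirst : ∀ z, anc p x z → anc p v z → anc p a z) :
    ∀ z, anc p z a → ∀ t, anc p t z → anc p x t → anc q t z := by
  intro z hza t htz
  induction htz using Relation.ReflTransGen.head_induction_on with
  | refl => exact fun _ => Relation.ReflTransGen.refl
  | @head t' c h₁ h₂ ih =>
    intro hxt'
    by_cases hvt : anc p v t'
    · have h1 : anc p a t' := hfirst t' hxt' hvt
      have ht'z : anc p t' z := Relation.ReflTransGen.head h₁ h₂
      have h2 : anc p t' a := ht'z.trans hza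
      have heq : t' = a := anc_antisymm hheap h2 h1
      have hzt : t' = z := anc_antisymm hheap ht'z (heq ▸ hza)
      rw [hzt]
      exact Relation.ReflTransGen.refl
    · have ht'S : t' ∈ S := anc_mem hdom hx hxt'
      have hqt : q t' = p t' := hq t' ht'S hvt
      have hstep : prel q t' c := by
        have h₁' : p t' = some c := h₁
        show q t' = some c
        rw [hqt]; exact h₁'
      exact Relation.ReflTransGen.head hstep (ih (hxt'.tail h₁))

/-- characterization of q-ancestors (⊆ direction) -/
lemma ancq_sub
    (hheap : ∀ a b : ℤ, p a = some b → b < a)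
    (hdom : ∀ a b : ℤ, p a = some b → a ∈ S ∧ b ∈ S)
    (hq : ∀ x ∈ S, ¬ anc p v x → q x = p x)
    (hqP' : ∀ t, P t → (∀ b : ℤ, q t = some b ↔ (P b ∧ b < t ∧
        ∀ z : ℤ, P z → z < t → z ≤ b)) ∧ (q t = none ↔ ∀ z : ℤ, P z → ¬ z < t))
    (hPanc : ∀ z, anc p v z → P z)
    {x a : ℤ} (hx : x ∈ S) (hva : anc p v a)
    (hfirst : ∀ z, anc p x z → anc p v z → anc p a z) :
    ∀ t z, anc q t z → ((anc p x t ∧ anc p t a) ∨ (P t ∧ t ≤ a)) →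
      ((anc p x z ∧ anc p z a) ∨ (P z ∧ z ≤ a)) := by
  intro t z h
  induction h using Relation.ReflTransGen.head_induction_on with
  | refl => exact id
  | @head t' c h₁ h₂ ih =>
    intro hinv
    apply ih
    rcases hinv with ⟨hxt, hta⟩ | ⟨hPt, hta⟩
    · by_cases hvt : anc p v t'
      · have heq : t' = a := anc_antisymm hheap hta (hfirst t' hxt hvt)
        have hPt : P t' := hPanc _ hvt
        have h₁' : q t' = some c := h₁
        obtain ⟨hPc, hct, _⟩ := ((hqP' t' hPt).1 c).mp h₁'
        exact Or.inr ⟨hPc, by omega⟩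
      · have hqt : q t' = p t' := hq t' (anc_mem hdom hx hxt) hvt
        have hpc : prel p t' c := by
          have h₁' : q t' = some c := h₁
          show p t' = some c
          rw [← hqt]; exact h₁'
        have hne : t' ≠ a := fun h => hvt (h ▸ hva)
        rcases hta.cases_head with h | ⟨d, hd, hda⟩
        · exact absurd h hne
        · have hdc : d = c := by
            have hd' : p t' = some d := hd
            have hpc' : p t' = some c := hpc
            rw [hpc'] at hd'; exact (Option.some.inj hd').symm
          exact Or.inl ⟨hxt.tail hpc, hdc ▸ hda⟩
    · have h₁' : q t' = some c := h₁
      obtain ⟨hPc, hct, _⟩ := ((hqP' t' hPt).1 c).mp h₁'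
      exact Or.inr ⟨hPc, by omega⟩

end Generic

lemma exists_first {S : Set ℤ} {p : ℤ → Option ℤ} {v r x : ℤ}
    (hheap : ∀ a b : ℤ, p a = some b → b < a)
    (hroot : ∀ x ∈ S, anc p x r) (hv : v ∈ S) (hx : x ∈ S) :
    ∃ a, anc p x a ∧ anc p v a ∧ ∀ z, anc p x z → anc p v z → anc p a z := by
  obtain ⟨a, ⟨hxa, hva⟩, hmax⟩ :=
    Int.exists_greatest_of_bdd (P := fun z => anc p x z ∧ anc p v z)
      ⟨x, fun z hz => anc_le hheap hz.1⟩ ⟨r, hroot x hx, hroot v hv⟩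
  refine ⟨a, hxa, hva, fun z hxz hvz => ?_⟩
  rcases anc_comp hxa hxz with h | h
  · exact h
  · have hz : z = a := le_antisymm (hmax z ⟨hxz, hvz⟩) (anc_le hheap h)
    rw [hz]
    exact Relation.ReflTransGen.refl



lemma ancq_le_mem {S₁ S₂ : Set ℤ} {p₁ p₂ q : ℤ → Option ℤ} {v w : ℤ}
    (hdom₁ : ∀ a b : ℤ, p₁ a = some b → a ∈ S₁ ∧ b ∈ S₁)
    (hdom₂ : ∀ a b : ℤ, p₂ a = some b → a ∈ S₂ ∧ b ∈ S₂)
    (hheap₁ : ∀ a b : ℤ, p₁ a = some b → b < a)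
    (hheap₂ : ∀ a b : ℤ, p₂ a = some b → b < a)
    (hv : v ∈ S₁) (hw : w ∈ S₂)
    -- `q` agrees with the old parent functions off the two merged root paths:
    (hq₁ : ∀ x ∈ S₁, ¬ anc p₁ v x → q x = p₁ x)
    (hq₂ : ∀ x ∈ S₂, ¬ anc p₂ w x → q x = p₂ x)
    -- on the merged path (the union of the two root paths), `q` links each node
    -- to the greatest smaller node of the merged path (none below the minimum):
    (hqP : ∀ x : ℤ, (anc p₁ v x ∨ anc p₂ w x) →
      (∀ b : ℤ, q x = some b ↔ ((anc p₁ v b ∨ anc p₂ w b) ∧ b < x ∧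
          ∀ z : ℤ, (anc p₁ v z ∨ anc p₂ w z) → z < x → z ≤ b)) ∧
      (q x = none ↔ ∀ z : ℤ, (anc p₁ v z ∨ anc p₂ w z) → ¬ z < x))
    {t z : ℤ} (h : anc q t z) : t ∈ S₁ ∪ S₂ → z ∈ S₁ ∪ S₂ ∧ z ≤ t := by
  induction h using Relation.ReflTransGen.head_induction_on with
  | refl => exact fun ht => ⟨ht, le_rfl⟩
  | @head t' c h₁ h₂ ih =>
    intro ht'
    have h₁' : q t' = some c := h₁
    have step : c ∈ S₁ ∪ S₂ ∧ c < t' := by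
      by_cases hP : anc p₁ v t' ∨ anc p₂ w t'
      · obtain ⟨hPc, hct, _⟩ := ((hqP t' hP).1 c).mp h₁'
        refine ⟨?_, hct⟩
        rcases hPc with h | h
        · exact Or.inl (anc_mem hdom₁ hv h)
        · exact Or.inr (anc_mem hdom₂ hw h)
      · rcases ht' with h | h
        · have hqt := hq₁ t' h (fun hh => hP (Or.inl hh))
          have hpc : p₁ t' = some c := by rw [← hqt]; exact h₁'
          exact ⟨Or.inl (hdom₁ _ _ hpc).2, hheap₁ _ _ hpc⟩
        · have hqt := hq₂ t' h (fun hh => hP (Or.inr hh))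
          have hpc : p₂ t' = some c := by rw [← hqt]; exact h₁'
          exact ⟨Or.inr (hdom₂ _ _ hpc).2, hheap₂ _ _ hpc⟩
    obtain ⟨hm, hl⟩ := ih step.1
    exact ⟨hm, le_trans hl (le_of_lt step.2)⟩

end MergeNca


open MergeNca

/-- Merging two heap-ordered trees `T₁ ∋ v` and `T₂ ∋ w` by interleaving the root
paths of `v` and `w` in increasing order (all other parents unchanged) yields a
tree `T` in which: if `x, y ∈ T₁` then `nca_T(x,y) = min T₁[x,y]`, and if `x ∈ T₁`,
`y ∈ T₂` then `nca_T(x,y) = min (T₁[x,v] ∪ T₂[y,w])`. -/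
theorem merge_two_trees_nca (S₁ S₂ : Set ℤ) (p₁ p₂ q : ℤ → Option ℤ) (v w : ℤ)
    (hdisj : Disjoint S₁ S₂)
    (hdom₁ : ∀ a b : ℤ, p₁ a = some b → a ∈ S₁ ∧ b ∈ S₁)
    (hdom₂ : ∀ a b : ℤ, p₂ a = some b → a ∈ S₂ ∧ b ∈ S₂)
    (hheap₁ : ∀ a b : ℤ, p₁ a = some b → b < a)
    (hheap₂ : ∀ a b : ℤ, p₂ a = some b → b < a)
    (r₁ : ℤ) (hr₁ : r₁ ∈ S₁) (hroot₁ : ∀ x ∈ S₁, anc p₁ x r₁)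
    (r₂ : ℤ) (hr₂ : r₂ ∈ S₂) (hroot₂ : ∀ x ∈ S₂, anc p₂ x r₂)
    (hv : v ∈ S₁) (hw : w ∈ S₂)
    -- `q` agrees with the old parent functions off the two merged root paths:
    (hq₁ : ∀ x ∈ S₁, ¬ anc p₁ v x → q x = p₁ x)
    (hq₂ : ∀ x ∈ S₂, ¬ anc p₂ w x → q x = p₂ x)
    -- on the merged path (the union of the two root paths), `q` links each node
    -- to the greatest smaller node of the merged path (none below the minimum):
    (hqP : ∀ x : ℤ, (anc p₁ v x ∨ anc p₂ w x) →
      (∀ b : ℤ, q x = some b ↔ ((anc p₁ v b ∨ anc p₂ w b) ∧ b < x ∧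
          ∀ z : ℤ, (anc p₁ v z ∨ anc p₂ w z) → z < x → z ≤ b)) ∧
      (q x = none ↔ ∀ z : ℤ, (anc p₁ v z ∨ anc p₂ w z) → ¬ z < x)) :
    (∀ x ∈ S₁, ∀ y ∈ S₁, ∀ u m : ℤ, IsNca p₁ x y u → IsNca q x y m →
        IsLeast (pathSet p₁ x y u) m) ∧
    (∀ x ∈ S₁, ∀ y ∈ S₂, ∀ u₁ u₂ m : ℤ, IsNca p₁ x v u₁ → IsNca p₂ y w u₂ →
        IsNca q x y m →
        IsLeast (pathSet p₁ x v u₁ ∪ pathSet p₂ y w u₂) m) := by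
  have hPanc1 : ∀ z, anc p₁ v z → (anc p₁ v z ∨ anc p₂ w z) := fun _ h => Or.inl h
  have hPanc2 : ∀ z, anc p₂ w z → (anc p₁ v z ∨ anc p₂ w z) := fun _ h => Or.inr h
  constructor
  · -- Part 1 : x, y ∈ S₁
    intro x hx y hy u m hu hm
    obtain ⟨hxu, hyu, hmin⟩ := hu
    obtain ⟨a, hxa, hva, hfa⟩ := exists_first hheap₁ hroot₁ hv hx
    obtain ⟨a', hya', hva', hfa'⟩ := exists_first hheap₁ hroot₁ hv hy
    have charX : ∀ z, anc q x z →
        ((anc p₁ x z ∧ anc p₁ z a) ∨ ((anc p₁ v z ∨ anc p₂ w z) ∧ z ≤ a)) :=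
      fun z h => ancq_sub hheap₁ hdom₁ hq₁ hqP hPanc1 hx hva hfa x z h
        (Or.inl ⟨Relation.ReflTransGen.refl, hxa⟩)
    have charY : ∀ z, anc q y z →
        ((anc p₁ y z ∧ anc p₁ z a') ∨ ((anc p₁ v z ∨ anc p₂ w z) ∧ z ≤ a')) :=
      fun z h => ancq_sub hheap₁ hdom₁ hq₁ hqP hPanc1 hy hva' hfa' y z h
        (Or.inl ⟨Relation.ReflTransGen.refl, hya'⟩)
    have hqxa : anc q x a :=
      ancq_path hheap₁ hdom₁ hq₁ hx hfa a Relation.ReflTransGen.refl x hxa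
        Relation.ReflTransGen.refl
    have hqya' : anc q y a' :=
      ancq_path hheap₁ hdom₁ hq₁ hy hfa' a' Relation.ReflTransGen.refl y hya'
        Relation.ReflTransGen.refl
    have hquxy : IsNca q x y u := by
      by_cases hP : anc p₁ v u
      · -- u lies on the merged path
        have hau : anc p₁ a u := hfa u hxu hP
        have ha'u : anc p₁ a' u := hfa' u hyu hP
        have hcase : u = a ∨ u = a' := by
          rcases anc_comp hva hva' with h | h
          · exact Or.inr (anc_antisymm hheap₁ (hmin a' (hxa.trans h) hya') ha'u)
          · exact Or.inl (anc_antisymm hheap₁ (hmin a hxa (hya'.trans h)) hau)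
        have hPu : anc p₁ v u ∨ anc p₂ w u := Or.inl hP
        have hqxu : anc q x u :=
          hqxa.trans (ancq_P' hqP (Or.inl hva) hPu (anc_le hheap₁ hau))
        have hqyu : anc q y u :=
          hqya'.trans (ancq_P' hqP (Or.inl hva') hPu (anc_le hheap₁ ha'u))
        refine ⟨hqxu, hqyu, fun z hz1 hz2 => ?_⟩
        rcases charX z hz1 with ⟨hxz, hza⟩ | ⟨hPz, hza⟩
        · rcases charY z hz2 with ⟨hyz, hza'⟩ | ⟨hPz, hza'⟩
          · have huz : anc p₁ u z := hmin z hxz hyz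
            exact ancq_P' hqP hPu (Or.inl (hP.trans huz)) (anc_le hheap₁ huz)
          · have hvz : anc p₁ v z := by
              rcases hPz with h | h
              · exact h
              · exact (Set.disjoint_left.mp hdisj (anc_mem hdom₁ hx hxz)
                  (anc_mem hdom₂ hw h)).elim
            have hzeq : z = a := anc_antisymm hheap₁ hza (hfa z hxz hvz)
            rcases hcase with hcu | hcu
            · rw [hcu, ← hzeq]; exact Relation.ReflTransGen.refl
            · exact ancq_P' hqP hPu hPz (by omega)
        · rcases charY z hz2 with ⟨hyz, hza'⟩ | ⟨hPz', hza'⟩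
          · have hvz : anc p₁ v z := by
              rcases hPz with h | h
              · exact h
              · exact (Set.disjoint_left.mp hdisj (anc_mem hdom₁ hy hyz)
                  (anc_mem hdom₂ hw h)).elim
            have hzeq : z = a' := anc_antisymm hheap₁ hza' (hfa' z hyz hvz)
            rcases hcase with hcu | hcu
            · exact ancq_P' hqP hPu hPz (by omega)
            · rw [hcu, ← hzeq]; exact Relation.ReflTransGen.refl
          · rcases hcase with hcu | hcu
            · exact ancq_P' hqP hPu hPz (by omega)
            · exact ancq_P' hqP hPu hPz (by omega)
      · -- u is strictly off the merged path
        have hua : anc p₁ u a := by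
          rcases anc_comp hxu hxa with h | h
          · exact h
          · exact absurd (hva.trans h) hP
        have hua' : anc p₁ u a' := by
          rcases anc_comp hyu hya' with h | h
          · exact h
          · exact absurd (hva'.trans h) hP
        have haa' : a = a' :=
          anc_antisymm hheap₁ (hfa a' (hxu.trans hua') hva') (hfa' a (hyu.trans hua) hva)
        have hqxu : anc q x u :=
          ancq_path hheap₁ hdom₁ hq₁ hx hfa u hua x hxu Relation.ReflTransGen.refl
        have hqyu : anc q y u :=
          ancq_path hheap₁ hdom₁ hq₁ hy hfa' u (haa' ▸ hua) y hyu Relation.ReflTransGen.refl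
        have hqua : anc q u a :=
          ancq_path hheap₁ hdom₁ hq₁ hx hfa a Relation.ReflTransGen.refl u hua hxu
        refine ⟨hqxu, hqyu, fun z hz1 hz2 => ?_⟩
        rcases charX z hz1 with ⟨hxz, hza⟩ | ⟨hPz, hza⟩
        · rcases charY z hz2 with ⟨hyz, hza'⟩ | ⟨hPz, hza'⟩
          · exact ancq_path hheap₁ hdom₁ hq₁ hx hfa z hza u (hmin z hxz hyz) hxu
          · have hvz : anc p₁ v z := by
              rcases hPz with h | h
              · exact h
              · exact (Set.disjoint_left.mp hdisj (anc_mem hdom₁ hx hxz)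
                  (anc_mem hdom₂ hw h)).elim
            have hzeq : z = a := anc_antisymm hheap₁ hza (hfa z hxz hvz)
            rw [hzeq]; exact hqua
        · rcases charY z hz2 with ⟨hyz, hza'⟩ | ⟨hPz', hza'⟩
          · have hvz : anc p₁ v z := by
              rcases hPz with h | h
              · exact h
              · exact (Set.disjoint_left.mp hdisj (anc_mem hdom₁ hy hyz)
                  (anc_mem hdom₂ hw h)).elim
            have hzeq : z = a' := anc_antisymm hheap₁ hza' (hfa' z hyz hvz)
            rw [hzeq, ← haa']; exact hqua
          · exact hqua.trans (ancq_P' hqP (Or.inl hva) hPz hza)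
    obtain ⟨hqxu, hqyu, hqmin⟩ := hquxy
    have hum : anc q u m := hqmin m hm.1 hm.2.1
    have hmu : anc q m u := hm.2.2 u hqxu hqyu
    have huS : u ∈ S₁ ∪ S₂ := Or.inl (anc_mem hdom₁ hx hxu)
    obtain ⟨hmS, hmle⟩ :=
      ancq_le_mem hdom₁ hdom₂ hheap₁ hheap₂ hv hw hq₁ hq₂ hqP hum huS
    have hule :=
      (ancq_le_mem hdom₁ hdom₂ hheap₁ hheap₂ hv hw hq₁ hq₂ hqP hmu hmS).2
    have hmueq : m = u := le_antisymm hmle hule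
    subst hmueq
    constructor
    · exact Or.inl ⟨hxu, Relation.ReflTransGen.refl⟩
    · intro z hz
      rcases hz with ⟨_, h⟩ | ⟨_, h⟩ <;> exact anc_le hheap₁ h
  · -- Part 2 : x ∈ S₁, y ∈ S₂
    intro x hx y hy u₁ u₂ m h1 h2 hm
    obtain ⟨hxu₁, hvu₁, hmin₁⟩ := h1
    obtain ⟨hyu₂, hwu₂, hmin₂⟩ := h2
    have hPu₁ : anc p₁ v u₁ ∨ anc p₂ w u₁ := Or.inl hvu₁
    have hPu₂ : anc p₁ v u₂ ∨ anc p₂ w u₂ := Or.inr hwu₂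
    have charX : ∀ z, anc q x z →
        ((anc p₁ x z ∧ anc p₁ z u₁) ∨ ((anc p₁ v z ∨ anc p₂ w z) ∧ z ≤ u₁)) :=
      fun z h => ancq_sub hheap₁ hdom₁ hq₁ hqP hPanc1 hx hvu₁ hmin₁ x z h
        (Or.inl ⟨Relation.ReflTransGen.refl, hxu₁⟩)
    have charY : ∀ z, anc q y z →
        ((anc p₂ y z ∧ anc p₂ z u₂) ∨ ((anc p₁ v z ∨ anc p₂ w z) ∧ z ≤ u₂)) :=
      fun z h => ancq_sub hheap₂ hdom₂ hq₂ hqP hPanc2 hy hwu₂ hmin₂ y z h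
        (Or.inl ⟨Relation.ReflTransGen.refl, hyu₂⟩)
    have hm'cases : min u₁ u₂ = u₁ ∨ min u₁ u₂ = u₂ := min_choice u₁ u₂
    have hPm' : anc p₁ v (min u₁ u₂) ∨ anc p₂ w (min u₁ u₂) := by
      rcases hm'cases with h | h
      · rw [h]; exact hPu₁
      · rw [h]; exact hPu₂
    have hqxu₁ : anc q x u₁ :=
      ancq_path hheap₁ hdom₁ hq₁ hx hmin₁ u₁ Relation.ReflTransGen.refl x hxu₁
        Relation.ReflTransGen.refl
    have hqyu₂ : anc q y u₂ :=
      ancq_path hheap₂ hdom₂ hq₂ hy hmin₂ u₂ Relation.ReflTransGen.refl y hyu₂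
        Relation.ReflTransGen.refl
    have hqxm' : anc q x (min u₁ u₂) :=
      hqxu₁.trans (ancq_P' hqP hPu₁ hPm' (min_le_left _ _))
    have hqym' : anc q y (min u₁ u₂) :=
      hqyu₂.trans (ancq_P' hqP hPu₂ hPm' (min_le_right _ _))
    have hnca : IsNca q x y (min u₁ u₂) := by
      refine ⟨hqxm', hqym', fun z hz1 hz2 => ?_⟩
      rcases charX z hz1 with ⟨hxz, hzu₁⟩ | ⟨hPz, hzu₁⟩
      · rcases charY z hz2 with ⟨hyz, _⟩ | ⟨hPz, hzu₂⟩
        · exact (Set.disjoint_left.mp hdisj (anc_mem hdom₁ hx hxz)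
            (anc_mem hdom₂ hy hyz)).elim
        · have hvz : anc p₁ v z := by
            rcases hPz with h | h
            · exact h
            · exact (Set.disjoint_left.mp hdisj (anc_mem hdom₁ hx hxz)
                (anc_mem hdom₂ hw h)).elim
          have hzeq : z = u₁ := anc_antisymm hheap₁ hzu₁ (hmin₁ z hxz hvz)
          have hle : u₁ ≤ u₂ := by omega
          rw [min_eq_left hle, ← hzeq]; exact Relation.ReflTransGen.refl
      · rcases charY z hz2 with ⟨hyz, hzu₂⟩ | ⟨hPz', hzu₂⟩
        · have hwz : anc p₂ w z := by
            rcases hPz with h | h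
            · exact (Set.disjoint_left.mp hdisj (anc_mem hdom₁ hv h)
                (anc_mem hdom₂ hy hyz)).elim
            · exact h
          have hzeq : z = u₂ := anc_antisymm hheap₂ hzu₂ (hmin₂ z hyz hwz)
          have hle : u₂ ≤ u₁ := by omega
          rw [min_eq_right hle, ← hzeq]; exact Relation.ReflTransGen.refl
        · exact ancq_P' hqP hPm' hPz (le_min hzu₁ hzu₂)
    obtain ⟨hqxm'2, hqym'2, hqmin'⟩ := hnca
    have hum : anc q (min u₁ u₂) m := hqmin' m hm.1 hm.2.1
    have hmu : anc q m (min u₁ u₂) := hm.2.2 (min u₁ u₂) hqxm' hqym'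
    have hm'S : min u₁ u₂ ∈ S₁ ∪ S₂ := by
      rcases hm'cases with h | h
      · rw [h]; exact Or.inl (anc_mem hdom₁ hx hxu₁)
      · rw [h]; exact Or.inr (anc_mem hdom₂ hy hyu₂)
    obtain ⟨hmS, hmle⟩ :=
      ancq_le_mem hdom₁ hdom₂ hheap₁ hheap₂ hv hw hq₁ hq₂ hqP hum hm'S
    have h2le :=
      (ancq_le_mem hdom₁ hdom₂ hheap₁ hheap₂ hv hw hq₁ hq₂ hqP hmu hmS).2
    have hmeq : m = min u₁ u₂ := le_antisymm hmle h2le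
    subst hmeq
    constructor
    · rcases hm'cases with h | h
      · rw [h]
        exact Set.mem_union_left _ (Or.inl ⟨hxu₁, Relation.ReflTransGen.refl⟩)
      · rw [h]
        exact Set.mem_union_right _ (Or.inl ⟨hyu₂, Relation.ReflTransGen.refl⟩)
    · intro z hz
      rcases hz with hz | hz
      · rcases hz with ⟨_, h⟩ | ⟨_, h⟩ <;>
          · have := anc_le hheap₁ h
            omega
      · rcases hz with ⟨_, h⟩ | ⟨_, h⟩ <;>
          · have := anc_le hheap₂ h
            omega
end

section
/- Let T₁ be a heap-ordered tree, let v, w ∈ T₁ with u = nca(v,w) ∉ {v,w}, let q be the child of u on the path to v, and let T₂ be the subtree rooted at q. Let T be the result of merging the paths from v and from w up to u. Then: if x, y are both in T₂ or both not in T₂, nca_T(x,y) = min(T₁[x,y]); if exactly one, say x, is in T₂, then nca_T(x,y) = min(T₂[x,v] ∪ T₁[w,y]). -/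
/-- `onMergedPath p v w u z` : `z` lies on the path from `v` or from `w` up to,
but excluding, their nearest common ancestor `u`. -/
def onMergedPath (p : ℤ → Option ℤ) (v w u z : ℤ) : Prop :=
  (anc p v z ∧ anc p z u ∧ z ≠ u) ∨ (anc p w z ∧ anc p z u ∧ z ≠ u)

/-!
In the merged tree `T` the merged path is a sorted chain hanging from `u`, so the ancestors of
`x` in `T` are its ancestors in `T₁` together with every merged-path node smaller than some
merged-path ancestor of `x` in `T₁` (`IsMerge.anc_iff`). In a heap-ordered tree the nearest
common ancestor is the greatest common ancestor. When `x` and `y` lie on the same side of `q`,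
their merged-path ancestors lie on one path of `T₁`, so every common ancestor in `T` is at most
`nca₁(x,y)`. When they lie on different sides, every common ancestor in `T` is at most both
`nca₁(x,v)` and `nca₁(w,y)`, and the smaller of these two is itself a common ancestor in `T`.
-/

open Relation

def HeapOrdered (p : ℤ → Option ℤ) : Prop := ∀ a b : ℤ, p a = some b → b < a

namespace anc

variable {p : ℤ → Option ℤ} {a b c s t u x y : ℤ}

theorem trans (h₁ : anc p a b) (h₂ : anc p b c) : anc p a c :=
  ReflTransGen.trans h₁ h₂

theorem le (hp : HeapOrdered p) (h : anc p a b) : b ≤ a := by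
  induction h with
  | refl => exact le_rfl
  | tail _ hbc ih => exact (hp _ _ hbc).le.trans ih

theorem antisymm (hp : HeapOrdered p) (h₁ : anc p a b) (h₂ : anc p b a) : a = b :=
  le_antisymm (h₂.le hp) (h₁.le hp)

theorem total (h₁ : anc p x a) (h₂ : anc p x b) : anc p a b ∨ anc p b a :=
  ReflTransGen.total_of_right_unique (fun _ _ _ h h' => Option.some.inj (h.symm.trans h')) h₁ h₂

theorem eq_or_anc_parent (hc : p c = some u) (h : anc p c t) : t = c ∨ anc p u t := by
  rcases ReflTransGen.cases_head h with rfl | ⟨d, hcd, hdt⟩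
  · exact Or.inl rfl
  · exact Or.inr (Option.some.inj (hcd.symm.trans hc) ▸ hdt)

theorem anc_child_of_anc_parent (hp : HeapOrdered p) (hc : p c = some u) (hat : anc p a t)
    (hac : anc p a c) (htu : anc p t u) (hne : t ≠ u) : anc p t c := by
  rcases hat.total hac with h | h
  · exact h
  · rcases eq_or_anc_parent hc h with rfl | hut
    · exact ReflTransGen.refl
    · exact absurd (antisymm hp htu hut) hne

theorem anc_parent_of_anc_of_anc_child (hc : p c = some u) (hxc : anc p x c)
    (hyc : ¬ anc p y c) (hxs : anc p x s) (hys : anc p y s) : anc p u s := by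
  rcases hxs.total hxc with h | h
  · exact absurd (hys.trans h) hyc
  · rcases eq_or_anc_parent hc h with rfl | hus
    · exact absurd hys hyc
    · exact hus

end anc

theorem IsNca.isGreatest {p : ℤ → Option ℤ} {x y m : ℤ} (hp : HeapOrdered p)
    (h : IsNca p x y m) : IsGreatest {s | anc p x s ∧ anc p y s} m :=
  ⟨⟨h.1, h.2.1⟩, fun s hs => (h.2.2 s hs.1 hs.2).le hp⟩

theorem isLeast_pathSet {p : ℤ → Option ℤ} {x y u : ℤ} (hp : HeapOrdered p) (h : anc p x u) :
    IsLeast (pathSet p x y u) u :=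
  ⟨Or.inl ⟨h, ReflTransGen.refl⟩, by rintro t (⟨-, h⟩ | ⟨-, h⟩) <;> exact h.le hp⟩

namespace onMergedPath

variable {p : ℤ → Option ℤ} {v w u a b s t x c : ℤ}

theorem anc_top (h : onMergedPath p v w u t) : anc p t u ∧ t ≠ u := by
  rcases h with ⟨-, h⟩ | ⟨-, h⟩ <;> exact h

theorem lt (hp : HeapOrdered p) (h : onMergedPath p v w u t) : u < t :=
  lt_of_le_of_ne (h.anc_top.1.le hp) h.anc_top.2.symm

theorem parent_mem_or_eq (h : onMergedPath p v w u a) (hab : p a = some b) :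
    onMergedPath p v w u b ∨ b = u := by
  obtain ⟨hau, hne⟩ := h.anc_top
  have hbu : anc p b u := by
    rcases ReflTransGen.cases_head hau with rfl | ⟨c, hac, hcu⟩
    · exact absurd rfl hne
    · rwa [Option.some.inj (hab.symm.trans hac)]
  by_cases hb : b = u
  · exact Or.inr hb
  · left
    rcases h with ⟨hva, -⟩ | ⟨hwa, -⟩
    · exact Or.inl ⟨ReflTransGen.tail hva hab, hbu, hb⟩
    · exact Or.inr ⟨ReflTransGen.tail hwa hab, hbu, hb⟩

theorem mem_or_anc_of_anc_right (hws : anc p w s) (hwu : anc p w u) :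
    onMergedPath p v w u s ∨ anc p u s := by
  rcases hws.total hwu with h | h
  · by_cases hs : s = u
    · exact Or.inr (hs ▸ ReflTransGen.refl)
    · exact Or.inl (Or.inr ⟨hws, h, hs⟩)
  · exact Or.inr h

theorem anc_left_of_anc_child (hp : HeapOrdered p) (hnca : IsNca p v w u) (hc : p c = some u)
    (hvc : anc p v c) (hxc : anc p x c) (ht : onMergedPath p v w u t) (hxt : anc p x t) :
    anc p v t := by
  rcases ht with ⟨hvt, -⟩ | ⟨hwt, htu, hne⟩
  · exact hvt
  · have hwc := hwt.trans (anc.anc_child_of_anc_parent hp hc hxt hxc htu hne)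
    exact absurd ((hnca.2.2 c hvc hwc).le hp) (hp c u hc).not_ge

theorem anc_right_of_not_anc_child (hp : HeapOrdered p) (hc : p c = some u) (hvc : anc p v c)
    (hxc : ¬ anc p x c) (ht : onMergedPath p v w u t) (hxt : anc p x t) : anc p w t := by
  rcases ht with ⟨hvt, htu, hne⟩ | ⟨hwt, -⟩
  · exact absurd (hxt.trans (anc.anc_child_of_anc_parent hp hc hvt hvc htu hne)) hxc
  · exact hwt

end onMergedPath

structure IsMerge (p₁ pT : ℤ → Option ℤ) (v w u : ℤ) : Prop where
  off : ∀ x : ℤ, ¬ onMergedPath p₁ v w u x → pT x = p₁ x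
  on : ∀ x : ℤ, onMergedPath p₁ v w u x → ∀ b : ℤ,
      pT x = some b ↔
        ((onMergedPath p₁ v w u b ∧ b < x ∧
            ∀ z : ℤ, onMergedPath p₁ v w u z → z < x → z ≤ b) ∨
         (b = u ∧ ∀ z : ℤ, onMergedPath p₁ v w u z → ¬ z < x))

namespace IsMerge

variable {p₁ pT : ℤ → Option ℤ} {v w u x y s : ℤ}
  (hp : HeapOrdered p₁) (hT : IsMerge p₁ pT v w u)

include hp hT

theorem heapOrdered : HeapOrdered pT := by
  intro a b hab
  by_cases ha : onMergedPath p₁ v w u a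
  · rcases (hT.on a ha b).1 hab with ⟨-, hba, -⟩ | ⟨rfl, -⟩
    · exact hba
    · exact ha.lt hp
  · exact hp a b ((hT.off a ha).symm.trans hab)

theorem anc_of_le {a b : ℤ} (ha : onMergedPath p₁ v w u a)
    (hb : (onMergedPath p₁ v w u b ∧ b ≤ a) ∨ b = u) : anc pT a b := by
  suffices key : ∀ n : ℕ, ∀ a, onMergedPath p₁ v w u a → a - u ≤ n →
      ∀ b, (onMergedPath p₁ v w u b ∧ b ≤ a) ∨ b = u → anc pT a b from
    key _ a ha (Int.self_le_toNat _) b hb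
  intro n
  induction n with
  | zero =>
    intro a ha hn
    have := ha.lt hp
    omega
  | succ n ih =>
    intro a ha hn b hb
    by_cases hlow : ∃ z, onMergedPath p₁ v w u z ∧ z < a
    · obtain ⟨c, ⟨hc, hca⟩, hmax⟩ := Int.exists_greatest_of_bdd ⟨a, fun z hz => hz.2.le⟩ hlow
      have hac : pT a = some c :=
        (hT.on a ha c).2 (Or.inl ⟨hc, hca, fun z hz hza => hmax z ⟨hz, hza⟩⟩)
      have hcn : c - u ≤ n := by omega
      rcases hb with ⟨hb, hba⟩ | rfl
      · rcases hba.eq_or_lt with rfl | hba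
        · exact ReflTransGen.refl
        · exact ReflTransGen.head hac (ih c hc hcn b (Or.inl ⟨hb, hmax b ⟨hb, hba⟩⟩))
      · exact ReflTransGen.head hac (ih c hc hcn _ (Or.inr rfl))
    · push Not at hlow
      have hau : pT a = some u := (hT.on a ha u).2 (Or.inr ⟨rfl, fun z hz => (hlow z hz).not_gt⟩)
      rcases hb with ⟨hb, hba⟩ | rfl
      · rcases hba.eq_or_lt with rfl | hba
        · exact ReflTransGen.refl
        · exact absurd hba (hlow b hb).not_gt
      · exact ReflTransGen.single hau

theorem anc_of_anc (h : anc p₁ x s) : anc pT x s := by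
  induction h with
  | refl => exact ReflTransGen.refl
  | @tail a b _ hab ih =>
    refine ih.trans ?_
    by_cases ha : onMergedPath p₁ v w u a
    · exact hT.anc_of_le hp ha ((ha.parent_mem_or_eq hab).imp_left fun hb => ⟨hb, (hp a b hab).le⟩)
    · exact ReflTransGen.single ((hT.off a ha).trans hab)

theorem anc_iff : anc pT x s ↔ anc p₁ x s ∨
    (onMergedPath p₁ v w u s ∧ ∃ t, onMergedPath p₁ v w u t ∧ anc p₁ x t ∧ s ≤ t) := by
  constructor
  · intro h
    induction h with
    | refl => exact Or.inl ReflTransGen.refl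
    | @tail a b _ hab ih =>
      by_cases ha : onMergedPath p₁ v w u a
      · obtain ⟨t, ht, hxt, hat⟩ : ∃ t, onMergedPath p₁ v w u t ∧ anc p₁ x t ∧ a ≤ t :=
          ih.elim (fun hxa => ⟨a, ha, hxa, le_rfl⟩) And.right
        rcases (hT.on a ha b).1 hab with ⟨hb, hba, -⟩ | ⟨rfl, -⟩
        · exact Or.inr ⟨hb, t, ht, hxt, by omega⟩
        · exact Or.inl (hxt.trans ht.anc_top.1)
      · rcases ih with hxa | ⟨ha', -⟩
        · exact Or.inl (ReflTransGen.tail hxa ((hT.off a ha).symm.trans hab))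
        · exact absurd ha' ha
  · rintro (h | ⟨hs, t, ht, hxt, hst⟩)
    · exact hT.anc_of_anc hp h
    · exact (hT.anc_of_anc hp hxt).trans (hT.anc_of_le hp ht (Or.inl ⟨hs, hst⟩))

theorem anc_of_anc_of_not_mem (h : anc pT x s) (hs : ¬ onMergedPath p₁ v w u s) :
    anc p₁ x s :=
  ((hT.anc_iff hp).1 h).resolve_right fun h => hs h.1

theorem exists_anc_of_anc_of_mem (h : anc pT x s) (hs : onMergedPath p₁ v w u s) :
    ∃ t, onMergedPath p₁ v w u t ∧ anc p₁ x t ∧ s ≤ t :=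
  ((hT.anc_iff hp).1 h).elim (fun h => ⟨s, hs, h, le_rfl⟩) And.right

theorem isGreatest_of_isNca_of_comparable {z : ℤ} (hz : IsNca p₁ x y z)
    (hcomp : ∀ t t', onMergedPath p₁ v w u t → onMergedPath p₁ v w u t' →
      anc p₁ x t → anc p₁ y t' → anc p₁ t t' ∨ anc p₁ t' t) :
    IsGreatest {s | anc pT x s ∧ anc pT y s} z := by
  refine ⟨⟨hT.anc_of_anc hp hz.1, hT.anc_of_anc hp hz.2.1⟩, ?_⟩
  rintro s ⟨hxs, hys⟩
  by_cases hs : onMergedPath p₁ v w u s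
  · obtain ⟨t, ht, hxt, hst⟩ := hT.exists_anc_of_anc_of_mem hp hxs hs
    obtain ⟨t', ht', hyt', hst'⟩ := hT.exists_anc_of_anc_of_mem hp hys hs
    rcases hcomp t t' ht ht' hxt hyt' with h | h
    · exact hst'.trans ((hz.2.2 t' (hxt.trans h) hyt').le hp)
    · exact hst.trans ((hz.2.2 t hxt (hyt'.trans h)).le hp)
  · exact (hz.2.2 s (hT.anc_of_anc_of_not_mem hp hxs hs)
      (hT.anc_of_anc_of_not_mem hp hys hs)).le hp

theorem isGreatest_min {u₁ u₂ : ℤ} (hnca : IsNca p₁ v w u)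
    (hx : ∀ t, onMergedPath p₁ v w u t → anc p₁ x t → anc p₁ v t)
    (hy : ∀ t, onMergedPath p₁ v w u t → anc p₁ y t → anc p₁ w t)
    (hxy : ∀ s, anc p₁ x s → anc p₁ y s → anc p₁ u s)
    (h₁ : IsNca p₁ x v u₁) (h₂ : IsNca p₁ w y u₂) (hu₁ : onMergedPath p₁ v w u u₁) :
    IsGreatest {s | anc pT x s ∧ anc pT y s} (min u₁ u₂) := by
  have hu₂ : onMergedPath p₁ v w u u₂ ∨ anc p₁ u u₂ :=
    onMergedPath.mem_or_anc_of_anc_right h₂.1 hnca.2.1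
  refine ⟨?_, ?_⟩
  · rcases le_total u₁ u₂ with h | h
    · rw [min_eq_left h]
      refine ⟨hT.anc_of_anc hp h₁.1, (hT.anc_iff hp).2 (Or.inr ⟨hu₁, u₂, ?_, h₂.2.1, h⟩)⟩
      exact hu₂.resolve_right fun hu => absurd (h.trans (hu.le hp)) (hu₁.lt hp).not_ge
    · rw [min_eq_right h]
      refine ⟨?_, hT.anc_of_anc hp h₂.2.1⟩
      rcases hu₂ with hu₂ | hu
      · exact (hT.anc_iff hp).2 (Or.inr ⟨hu₂, u₁, hu₁, h₁.1, h⟩)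
      · exact hT.anc_of_anc hp ((h₁.1.trans hu₁.anc_top.1).trans hu)
  · rintro s ⟨hxs, hys⟩
    by_cases hs : onMergedPath p₁ v w u s
    · obtain ⟨t, ht, hxt, hst⟩ := hT.exists_anc_of_anc_of_mem hp hxs hs
      obtain ⟨t', ht', hyt', hst'⟩ := hT.exists_anc_of_anc_of_mem hp hys hs
      exact le_min (hst.trans ((h₁.2.2 t hxt (hx t ht hxt)).le hp))
        (hst'.trans ((h₂.2.2 t' (hy t' ht' hyt') hyt').le hp))
    · have hus := hxy s (hT.anc_of_anc_of_not_mem hp hxs hs) (hT.anc_of_anc_of_not_mem hp hys hs)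
      exact le_min ((h₁.2.2 s (hT.anc_of_anc_of_not_mem hp hxs hs) (hnca.1.trans hus)).le hp)
        ((h₂.2.2 s (hnca.2.1.trans hus) (hT.anc_of_anc_of_not_mem hp hys hs)).le hp)

end IsMerge

theorem merge_same_tree_nca_general (S : Set ℤ) (p₁ pT : ℤ → Option ℤ) (v w u qc : ℤ)
    (hheap : ∀ a b : ℤ, p₁ a = some b → b < a)
    (hnca : IsNca p₁ v w u)
    (hqc : p₁ qc = some u) (hqcv : anc p₁ v qc)
    -- `pT` agrees with `p₁` off the merged path:
    (hoff : ∀ x : ℤ, ¬ onMergedPath p₁ v w u x → pT x = p₁ x)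
    -- on the merged path, `pT` links each node to the greatest smaller node of the
    -- merged path, and the minimum node of the merged path to `u`:
    (hon : ∀ x : ℤ, onMergedPath p₁ v w u x → ∀ b : ℤ,
      pT x = some b ↔
        ((onMergedPath p₁ v w u b ∧ b < x ∧
            ∀ z : ℤ, onMergedPath p₁ v w u z → z < x → z ≤ b) ∨
         (b = u ∧ ∀ z : ℤ, onMergedPath p₁ v w u z → ¬ z < x))) :
    (∀ x ∈ S, ∀ y ∈ S,
        ((anc p₁ x qc ∧ anc p₁ y qc) ∨ (¬ anc p₁ x qc ∧ ¬ anc p₁ y qc)) →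
        ∀ z m : ℤ, IsNca p₁ x y z → IsNca pT x y m →
          IsLeast (pathSet p₁ x y z) m) ∧
    (∀ x ∈ S, ∀ y ∈ S, anc p₁ x qc → ¬ anc p₁ y qc →
        ∀ u₁ u₂ m : ℤ, IsNca p₁ x v u₁ → IsNca p₁ w y u₂ → IsNca pT x y m →
          IsLeast (pathSet p₁ x v u₁ ∪ pathSet p₁ w y u₂) m) := by
  have hT : IsMerge p₁ pT v w u := ⟨hoff, hon⟩
  have hpT : HeapOrdered pT := hT.heapOrdered hheap
  have hin : ∀ {x t}, anc p₁ x qc → onMergedPath p₁ v w u t → anc p₁ x t → anc p₁ v t :=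
    onMergedPath.anc_left_of_anc_child hheap hnca hqc hqcv
  have hout : ∀ {x t}, ¬ anc p₁ x qc → onMergedPath p₁ v w u t → anc p₁ x t → anc p₁ w t :=
    onMergedPath.anc_right_of_not_anc_child hheap hqc hqcv
  refine ⟨fun x _ y _ hside z m hz hm => ?_, fun x _ y _ hxq hyq u₁ u₂ m h₁ h₂ hm => ?_⟩
  · have hcomp : ∀ t t', onMergedPath p₁ v w u t → onMergedPath p₁ v w u t' →
        anc p₁ x t → anc p₁ y t' → anc p₁ t t' ∨ anc p₁ t' t := by
      intro t t' ht ht' hxt hyt'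
      rcases hside with ⟨hxq, hyq⟩ | ⟨hxq, hyq⟩
      · exact (hin hxq ht hxt).total (hin hyq ht' hyt')
      · exact (hout hxq ht hxt).total (hout hyq ht' hyt')
    rw [(hm.isGreatest hpT).unique (hT.isGreatest_of_isNca_of_comparable hheap hz hcomp)]
    exact isLeast_pathSet hheap hz.1
  · have hu₁q : anc p₁ u₁ qc := h₁.2.2 qc hxq hqcv
    have hu₁ : onMergedPath p₁ v w u u₁ :=
      Or.inl ⟨h₁.2.1, hu₁q.trans (ReflTransGen.single hqc),
        ((hheap qc u hqc).trans_le (hu₁q.le hheap)).ne'⟩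
    rw [(hm.isGreatest hpT).unique (hT.isGreatest_min hheap hnca (fun _ => hin hxq)
      (fun _ => hout hyq) (fun _ => anc.anc_parent_of_anc_of_anc_child hqc hxq hyq) h₁ h₂ hu₁)]
    exact (isLeast_pathSet hheap h₁.1).union (isLeast_pathSet hheap h₂.1)

/-- Merging, inside a single heap-ordered tree `T₁`, the paths from `v` and `w` up
to (but excluding) `u = nca(v,w) ∉ {v,w}`, with `q` the child of `u` towards `v`
and `T₂` the subtree rooted at `q`: in the resulting tree `T`, if `x` and `y` are
both in `T₂` or both outside `T₂`, then `nca_T(x,y) = min T₁[x,y]`; if exactly one,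
say `x`, is in `T₂`, then `nca_T(x,y) = min (T₂[x,v] ∪ T₁[w,y])`. -/
theorem merge_same_tree_nca (S : Set ℤ) (p₁ pT : ℤ → Option ℤ) (v w u qc : ℤ)
    (hdom : ∀ a b : ℤ, p₁ a = some b → a ∈ S ∧ b ∈ S)
    (hheap : ∀ a b : ℤ, p₁ a = some b → b < a)
    (hv : v ∈ S) (hw : w ∈ S)
    (hnca : IsNca p₁ v w u) (huv : u ≠ v) (huw : u ≠ w)
    (hqc : p₁ qc = some u) (hqcv : anc p₁ v qc)
    -- `pT` agrees with `p₁` off the merged path: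
    (hoff : ∀ x : ℤ, ¬ onMergedPath p₁ v w u x → pT x = p₁ x)
    -- on the merged path, `pT` links each node to the greatest smaller node of the
    -- merged path, and the minimum node of the merged path to `u`:
    (hon : ∀ x : ℤ, onMergedPath p₁ v w u x → ∀ b : ℤ,
      pT x = some b ↔
        ((onMergedPath p₁ v w u b ∧ b < x ∧
            ∀ z : ℤ, onMergedPath p₁ v w u z → z < x → z ≤ b) ∨
         (b = u ∧ ∀ z : ℤ, onMergedPath p₁ v w u z → ¬ z < x))) :
    (∀ x ∈ S, ∀ y ∈ S,
        ((anc p₁ x qc ∧ anc p₁ y qc) ∨ (¬ anc p₁ x qc ∧ ¬ anc p₁ y qc)) →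
        ∀ z m : ℤ, IsNca p₁ x y z → IsNca pT x y m →
          IsLeast (pathSet p₁ x y z) m) ∧
    (∀ x ∈ S, ∀ y ∈ S, anc p₁ x qc → ¬ anc p₁ y qc →
        ∀ u₁ u₂ m : ℤ, IsNca p₁ x v u₁ → IsNca p₁ w y u₂ → IsNca pT x y m →
          IsLeast (pathSet p₁ x v u₁ ∪ pathSet p₁ w y u₂) m) :=
  merge_same_tree_nca_general S p₁ pT v w u qc hheap hnca hqc hqcv hoff hon
end

section
/- Let T₁ be a heap-ordered tree, v, w ∈ T₁ with u = nca(v,w) ∉ {v,w}, q the child of u that is an ancestor of v, and T₂ the subtree of T₁ rooted at q. Let T₁' be any tree equivalent to T₁, rerooted at v, with r the parent of u in T₁', and let T₂' be the component containing v after deleting the arc from u to r. Then every node of T₂ is in T₂', and every node of T₂' not in T₂ is not a descendant of u in T₁. -/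
lemma anc_total (p : ℤ → Option ℤ) {x b c : ℤ} (h1 : anc p x b) (h2 : anc p x c) :
    anc p b c ∨ anc p c b := by
  induction h1 using Relation.ReflTransGen.head_induction_on with
  | refl => exact Or.inl h2
  | head hstep htail ih =>
    rcases Relation.ReflTransGen.cases_head h2 with rfl | ⟨d, hd, hdc⟩
    · exact Or.inr (Relation.ReflTransGen.head hstep htail)
    · have hde : d = _ := Option.some.inj (hd.symm.trans hstep)
      exact ih (hde ▸ hdc)

lemma anc_le (p : ℤ → Option ℤ) (hheap : ∀ a b : ℤ, p a = some b → b < a)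
    {a b : ℤ} (h : anc p a b) : b ≤ a := by
  induction h with
  | refl => exact le_refl _
  | tail h1 h2 ih => exact le_trans (le_of_lt (hheap _ _ h2)) ih

lemma nca_exists (p : ℤ → Option ℤ) {x y t : ℤ} (hx : anc p x t) (hy : anc p y t) :
    ∃ c, IsNca p x y c := by
  induction hx using Relation.ReflTransGen.head_induction_on with
  | refl => exact ⟨t, Relation.ReflTransGen.refl, hy, fun z hz _ => hz⟩
  | @head a a₁ hstep htail ih =>
    by_cases hyx : anc p y a
    · exact ⟨a, Relation.ReflTransGen.refl, hyx, fun z hz _ => hz⟩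
    · obtain ⟨c, hc1, hc2, hc3⟩ := ih
      refine ⟨c, Relation.ReflTransGen.head hstep hc1, hc2, ?_⟩
      intro z hz hyz
      rcases Relation.ReflTransGen.cases_head hz with rfl | ⟨d, hd, hdz⟩
      · exact absurd hyz hyx
      · have hde : d = a₁ := Option.some.inj (hd.symm.trans hstep)
        exact hc3 z (hde ▸ hdz) hyz

/-- Let `T₁` (parent function `p₁` on node set `S`) be heap-ordered, with
`u = nca(v,w) ∉ {v,w}`, `qc` the child of `u` that is an ancestor of `v`, and `T₂`
the subtree of `T₁` rooted at `qc`.  Let `T₁'` (parent function `p'`) be any tree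
on `S`, rerooted at `v`, equivalent to `T₁` (minima of corresponding paths agree),
and let `r` be the parent of `u` in `T₁'`; `T₂'` is the component containing `v`
after deleting the arc from `u` to `r`, i.e. the complement of the subtree of `u`
in `T₁'`.  Then every node of `T₂` is in `T₂'`, and every node of `T₂'` not in `T₂`
is not a descendant of `u` in `T₁`. -/
theorem subtree_containment (S : Set ℤ) (p₁ p' : ℤ → Option ℤ) (v w u qc r : ℤ)
    (hdom : ∀ a b : ℤ, p₁ a = some b → a ∈ S ∧ b ∈ S)
    (hheap : ∀ a b : ℤ, p₁ a = some b → b < a)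
    (hv : v ∈ S) (hw : w ∈ S)
    (hnca : IsNca p₁ v w u) (huv : u ≠ v) (huw : u ≠ w)
    (hqc : p₁ qc = some u) (hqcv : anc p₁ v qc)
    (hdom' : ∀ a b : ℤ, p' a = some b → a ∈ S ∧ b ∈ S)
    (hroot' : ∀ x ∈ S, anc p' x v)
    -- equivalence of `T₁` and `T₁'`: since `T₁` is heap-ordered, the minimum of
    -- `T₁[x,y]` is `nca_{T₁}(x,y)`, and it must also be the least node of `T₁'[x,y]`:
    (hequiv : ∀ x ∈ S, ∀ y ∈ S, ∀ c c' : ℤ, IsNca p₁ x y c → IsNca p' x y c' →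
        IsLeast (pathSet p' x y c') c)
    (hr : p' u = some r) :
    (∀ x : ℤ, anc p₁ x qc → ¬ anc p' x u) ∧
    (∀ x ∈ S, ¬ anc p' x u → ¬ anc p₁ x qc → ¬ anc p₁ x u) := by
  have huS : u ∈ S := (hdom qc u hqc).2
  have hqcS : qc ∈ S := (hdom qc u hqc).1
  -- membership of descendants of qc
  have hmemqc : ∀ x : ℤ, anc p₁ x qc → x ∈ S := by
    intro x hx
    rcases Relation.ReflTransGen.cases_head hx with rfl | ⟨d, hd, _⟩
    · exact hqcS
    · exact (hdom x d hd).1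
  have hncaV : ∀ x ∈ S, IsNca p' x v v := by
    intro x hx
    exact ⟨hroot' x hx, Relation.ReflTransGen.refl, fun z _ hz => hz⟩
  constructor
  · intro x hxqc hxu'
    have hxS : x ∈ S := hmemqc x hxqc
    obtain ⟨m, hm1, hm2, hm3⟩ := nca_exists p₁ hxqc hqcv
    have hmqc : anc p₁ m qc := hm3 qc hxqc hqcv
    have hum : u < m := lt_of_lt_of_le (hheap qc u hqc) (anc_le p₁ hheap hmqc)
    have hleast : IsLeast (pathSet p' x v v) m :=
      hequiv x hxS v hv m v ⟨hm1, hm2, hm3⟩ (hncaV x hxS)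
    have humem : u ∈ pathSet p' x v v := Or.inl ⟨hxu', hroot' u huS⟩
    exact absurd (hleast.2 humem) (not_le_of_gt hum)
  · intro x hxS hxu' hxqc hxu
    have hvu : anc p₁ v u := Relation.ReflTransGen.tail hqcv hqc
    have hxvu : IsNca p₁ x v u := by
      refine ⟨hxu, hvu, ?_⟩
      intro z hxz hvz
      rcases anc_total p₁ hqcv hvz with hqz | hzq
      · rcases Relation.ReflTransGen.cases_head hqz with rfl | ⟨d, hd, hdz⟩
        · exact absurd hxz hxqc
        · have hde : d = u := Option.some.inj (hd.symm.trans hqc)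
          exact hde ▸ hdz
      · exact absurd (Relation.ReflTransGen.trans hxz hzq) hxqc
    have hleast : IsLeast (pathSet p' x v v) u :=
      hequiv x hxS v hv u v hxvu (hncaV x hxS)
    rcases hleast.1 with ⟨h1, _⟩ | ⟨h1, _⟩
    · exact hxu' h1
    · exact hxu' (Relation.ReflTransGen.trans (hroot' x hxS) h1)
end

section
/- There exists a sequence of merges on n = 2^k single-node trees (no cuts) with n − 1 merges and Ω(n log n) total parent changes: merging paths in pairs with perfect interleaving at each of the k levels causes n/2 + 3n/4 + 7n/8 + ... parent changes, which is at least (n/2)·k − n. -/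
/-- `MergeStep p q v w` : the forest `q` is obtained from the forest `p` by
`merge(v,w)`: the nodes of the root paths of `v` and `w` are rearranged into a
single chain in increasing (heap) order, all other parents unchanged. -/
def MergeStep (p q : ℤ → Option ℤ) (v w : ℤ) : Prop :=
  (∀ x : ℤ, ¬ (anc p v x ∨ anc p w x) → q x = p x) ∧
  (∀ x : ℤ, (anc p v x ∨ anc p w x) →
    (∀ b : ℤ, q x = some b ↔ ((anc p v b ∨ anc p w b) ∧ b < x ∧
        ∀ z : ℤ, (anc p v z ∨ anc p w z) → z < x → z ≤ b)) ∧
    (q x = none ↔ ∀ z : ℤ, (anc p v z ∨ anc p w z) → ¬ z < x))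

open Finset

theorem Int.ModEq.le_of_lt_add {n a b : ℤ} (h : a ≡ b [ZMOD n]) (hlt : a < b + n) : a ≤ b := by
  obtain ⟨c, hc⟩ := Int.modEq_iff_dvd.mp h
  rcases le_or_gt n 0 with hn | hn
  · linarith
  · have : 0 ≤ c := by
      by_contra hneg
      nlinarith
    nlinarith

theorem Int.modEq_iff_modEq_two_mul_or {n a b : ℤ} :
    a ≡ b [ZMOD n] ↔ a ≡ b [ZMOD 2 * n] ∨ a ≡ b + n [ZMOD 2 * n] := by
  refine ⟨fun h => ?_, ?_⟩
  · obtain ⟨c, hc⟩ := Int.modEq_iff_dvd.mp h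
    obtain ⟨r, rfl | rfl⟩ := Int.even_or_odd' c
    · exact .inl (Int.modEq_iff_dvd.mpr ⟨r, by linarith⟩)
    · exact .inr (Int.modEq_iff_dvd.mpr ⟨r + 1, by linarith⟩)
  · rintro (h | h)
    · exact h.of_mul_left 2
    · exact (h.of_mul_left 2).trans (Int.modEq_iff_dvd.mpr ⟨-1, by ring⟩)

theorem mergeStep_of_isGreatest {p q : ℤ → Option ℤ} {v w : ℤ} (U : Set ℤ)
    (hU : ∀ x, anc p v x ∨ anc p w x ↔ x ∈ U)
    (hout : ∀ x ∉ U, q x = p x)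
    (hsome : ∀ x ∈ U, ∀ b, q x = some b → IsGreatest {z | z ∈ U ∧ z < x} b)
    (hnone : ∀ x ∈ U, q x = none → ∀ z ∈ U, x ≤ z) :
    MergeStep p q v w := by
  simp only [MergeStep, hU]
  refine ⟨hout, fun x hx =>
    ⟨fun b => ⟨fun hb => ?_, fun hb => ?_⟩, ⟨fun h z hz => ?_, fun h => ?_⟩⟩⟩
  · obtain ⟨⟨hbU, hbx⟩, hmax⟩ := hsome x hx b hb
    exact ⟨hbU, hbx, fun z hz hzx => hmax ⟨hz, hzx⟩⟩
  · cases hq : q x with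
    | none => exact absurd (hnone x hx hq b hb.1) (not_le.mpr hb.2.1)
    | some c =>
      exact congrArg some
        ((hsome x hx c hq).unique ⟨⟨hb.1, hb.2.1⟩, fun z hz => hb.2.2 z hz.1 hz.2⟩)
  · exact not_lt.mpr (hnone x hx h z hz)
  · cases hq : q x with
    | none => rfl
    | some c => exact absurd (hsome x hx c hq).1.2 (h c (hsome x hx c hq).1.1)

def stepForest (N : ℤ) (d : ℤ → ℤ) (x : ℤ) : Option ℤ :=
  if 0 ≤ x - d x ∧ x < N then some (x - d x) else none

theorem stepForest_mem {N b x : ℤ} {d : ℤ → ℤ} (hd : ∀ y, 0 ≤ d y)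
    (h : stepForest N d x = some b) : (0 ≤ x ∧ x < N) ∧ 0 ≤ b ∧ b < N := by
  unfold stepForest at h
  split_ifs at h with hx
  cases h
  have := hd x
  omega

theorem anc_stepForest_iff {N M x y : ℤ} {d : ℤ → ℤ} (hM : 0 < M)
    (hd : ∀ y, y ≡ x [ZMOD M] → d y = M) (hx : 0 ≤ x) (hxN : x < N) :
    anc (stepForest N d) x y ↔ 0 ≤ y ∧ y ≤ x ∧ y ≡ x [ZMOD M] := by
  constructor
  · intro h
    induction h with
    | refl => exact ⟨hx, le_rfl, rfl⟩
    | tail _ hbc ih =>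
      obtain ⟨hb0, hbx, hbmod⟩ := ih
      have hstep : stepForest N d _ = some _ := hbc
      rw [stepForest, hd _ hbmod] at hstep
      split_ifs at hstep with hb
      cases hstep
      exact ⟨hb.1, by omega, (Int.modEq_iff_dvd.mpr ⟨1, by ring⟩).trans hbmod⟩
  · rintro ⟨hy0, hyx, hymod⟩
    obtain ⟨c, hc⟩ := Int.modEq_iff_dvd.mp hymod
    have hc0 : 0 ≤ c := by
      by_contra hneg
      nlinarith
    lift c to ℕ using hc0
    induction c generalizing y with
    | zero =>
      obtain rfl : y = x := by simpa [sub_eq_zero, eq_comm] using hc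
      exact .refl
    | succ c ih =>
      have hc' : x - (y + M) = M * c := by push_cast at hc; linarith
      have hcM : 0 ≤ M * c := by positivity
      have hmod : y + M ≡ x [ZMOD M] := Int.modEq_iff_dvd.mpr ⟨c, hc'⟩
      refine .tail (ih (by linarith) (by linarith) hmod hc') ?_
      show stepForest N d (y + M) = some y
      rw [stepForest, hd _ hmod, if_pos ⟨by linarith, by linarith⟩, add_sub_cancel_right]

theorem anc_stepForest_iff_of_le_add {N M x y : ℤ} {d : ℤ → ℤ} (hM : 0 < M)
    (hd : ∀ y, y ≡ x [ZMOD M] → d y = M) (hx : 0 ≤ x) (hxN : x < N) (hNx : N ≤ x + M) :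
    anc (stepForest N d) x y ↔ 0 ≤ y ∧ y < N ∧ y ≡ x [ZMOD M] := by
  rw [anc_stepForest_iff hM hd hx hxN]
  exact ⟨fun ⟨h0, hyx, hmod⟩ => ⟨h0, hyx.trans_lt hxN, hmod⟩,
    fun ⟨h0, hyN, hmod⟩ => ⟨h0, hmod.le_of_lt_add (by linarith), hmod⟩⟩

/-- The residue classes modulo `h` below `j` are single paths with step `h`; every other residue
class modulo `h` is still split into two paths with step `2h`, one per residue class modulo `2h`. -/
def pathForest (N h j : ℕ) : ℤ → Option ℤ :=
  stepForest N fun x => if x % h < j then h else 2 * h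

theorem pathForest_mem {N h j : ℕ} {x b : ℤ} (hxb : pathForest N h j x = some b) :
    (0 ≤ x ∧ x < N) ∧ 0 ≤ b ∧ b < N :=
  stepForest_mem (fun y => by split_ifs <;> positivity) hxb

theorem pathForest_two_mul_self (N h : ℕ) : pathForest N (2 * h) (2 * h) = pathForest N h 0 := by
  funext x
  unfold pathForest stepForest
  rcases Nat.eq_zero_or_pos h with rfl | hh
  · simp
  · have hlt : x % ((2 * h : ℕ) : ℤ) < ((2 * h : ℕ) : ℤ) :=
      Int.emod_lt_of_pos x (by positivity)
    have hge : ¬ x % (h : ℤ) < ((0 : ℕ) : ℤ) := by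
      simpa using Int.emod_nonneg x (by positivity)
    simp only [if_pos hlt, if_neg hge]
    push_cast
    rfl

theorem emod_eq_of_modEq {h j : ℕ} {x : ℤ} (hj : j < h) (hx : x ≡ j [ZMOD h]) : x % h = j := by
  unfold Int.ModEq at hx
  rw [hx, Int.emod_eq_of_lt (by positivity) (by exact_mod_cast hj)]

section Merge

variable {N h j : ℕ} (hh : 0 < h) (hj : j < h)
include hh hj

theorem anc_pathForest_or_iff (hN : 2 * h ∣ N) (hN0 : 0 < N) (y : ℤ) :
    anc (pathForest N h j) (N - 2 * h + j) y ∨ anc (pathForest N h j) (N - h + j) y ↔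
      0 ≤ y ∧ y < N ∧ y ≡ j [ZMOD h] := by
  have hd : ∀ y, y ≡ j [ZMOD h] → (if y % h < j then (h : ℤ) else 2 * h) = 2 * h := fun y hy => by
    rw [if_neg (by rw [emod_eq_of_modEq hj hy]; exact lt_irrefl _)]
  obtain ⟨e, he⟩ := hN
  have h2h : 2 * h ≤ N := Nat.le_of_dvd hN0 ⟨e, he⟩
  have hv : (N - 2 * h + j : ℤ) ≡ j [ZMOD 2 * h] :=
    Int.modEq_iff_dvd.mpr ⟨1 - e, by push_cast [he]; ring⟩
  have hw : (N - h + j : ℤ) ≡ j + h [ZMOD 2 * h] :=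
    Int.modEq_iff_dvd.mpr ⟨1 - e, by push_cast [he]; ring⟩
  have hjh : (j + h : ℤ) ≡ j [ZMOD h] := Int.modEq_iff_dvd.mpr ⟨-1, by ring⟩
  unfold pathForest
  rw [anc_stepForest_iff_of_le_add (by positivity)
      (fun y hy => hd y ((hy.trans hv).of_mul_left 2)) (by omega) (by omega) (by omega),
    anc_stepForest_iff_of_le_add (by positivity)
      (fun y hy => hd y (((hy.trans hw).of_mul_left 2).trans hjh)) (by omega) (by omega) (by omega)]
  constructor
  · rintro (⟨h0, hN, hy⟩ | ⟨h0, hN, hy⟩)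
    · exact ⟨h0, hN, Int.modEq_iff_modEq_two_mul_or.mpr (.inl (hy.trans hv))⟩
    · exact ⟨h0, hN, Int.modEq_iff_modEq_two_mul_or.mpr (.inr (hy.trans hw))⟩
  · rintro ⟨h0, hN, hy⟩
    rcases Int.modEq_iff_modEq_two_mul_or.mp hy with hy | hy
    · exact .inl ⟨h0, hN, hy.trans hv.symm⟩
    · exact .inr ⟨h0, hN, hy.trans hw.symm⟩

theorem mergeStep_pathForest (hN : 2 * h ∣ N) (hN0 : 0 < N) :
    MergeStep (pathForest N h j) (pathForest N h (j + 1)) (N - 2 * h + j) (N - h + j) := by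
  set U : Set ℤ := {y | 0 ≤ y ∧ y < N ∧ y ≡ j [ZMOD h]}
  have hnew : ∀ x ∈ U, pathForest N h (j + 1) x =
      if 0 ≤ x - h ∧ x < N then some (x - h) else none := fun x hx => by
    simp only [pathForest, stepForest, emod_eq_of_modEq hj hx.2.2, Nat.cast_add, Nat.cast_one,
      lt_add_one, if_true]
  have hpred : ∀ x ∈ U, ∀ z ∈ U, z < x → z ≤ x - h := fun x hx z hz hzx =>
    (hz.2.2.trans (hx.2.2.symm.trans (Int.modEq_iff_dvd.mpr ⟨-1, by ring⟩))).le_of_lt_add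
      (by linarith)
  refine mergeStep_of_isGreatest U (anc_pathForest_or_iff hh hj hN hN0) ?_ ?_ ?_
  · intro x hx
    have hne : 0 ≤ x → x < N → x % h ≠ j := fun h0 hN hxj =>
      hx ⟨h0, hN, hxj.trans (Int.emod_eq_of_lt (by positivity) (by exact_mod_cast hj)).symm⟩
    unfold pathForest stepForest
    push_cast
    split_ifs <;> first | rfl | omega
  · intro x hx b hb
    rw [hnew x hx] at hb
    split_ifs at hb with hxh
    cases hb
    exact ⟨⟨⟨hxh.1, by omega, (Int.modEq_iff_dvd.mpr ⟨1, by ring⟩).trans hx.2.2⟩, by omega⟩,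
      fun z hz => hpred x hx z hz.1 hz.2⟩
  · intro x hx hq z hz
    rw [hnew x hx] at hq
    split_ifs at hq with hxh
    by_contra hzx
    have := hpred x hx z hz (not_le.mp hzx)
    have := hz.1
    have := hx.2.1
    omega

theorem card_pathForest_changes :
    N / h - 1 ≤ #{x ∈ Ico (0 : ℤ) N | pathForest N h (j + 1) x ≠ pathForest N h j x} := by
  have hinj : Function.Injective fun q : ℕ => (j + h * q : ℤ) := fun a b hab => by
    simpa [hh.ne'] using hab
  calc N / h - 1 = #((Ico 1 (N / h)).image fun q : ℕ => (j + h * q : ℤ)) := by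
        rw [card_image_of_injective _ hinj, Nat.card_Ico]
    _ ≤ _ := card_le_card fun x hx => by
        obtain ⟨q, hq, rfl⟩ := mem_image.mp hx
        obtain ⟨hq1, hqN⟩ := mem_Ico.mp hq
        have hlt : h * (q + 1) ≤ N := (Nat.mul_le_mul_left h hqN).trans (Nat.mul_div_le N h)
        have hmod : (j + h * q : ℤ) % h = j := by
          rw [Int.add_mul_emod_self_left, Int.emod_eq_of_lt (by positivity) (by exact_mod_cast hj)]
        have hhq : (h : ℤ) ≤ h * q := by exact_mod_cast Nat.le_mul_of_pos_right h hq1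
        have hlt' : (j + h * q : ℤ) < N := by push_cast [mul_add] at hlt ⊢; omega
        refine mem_filter.mpr ⟨mem_Ico.mpr ⟨by positivity, hlt'⟩, ?_⟩
        simp only [pathForest, stepForest, hmod]
        push_cast
        split_ifs <;> simp <;> omega

end Merge

def mergeLevel (p : ℕ) : ℕ := 2 ^ Nat.log 2 p

theorem mergeLevel_le {p : ℕ} (hp : p ≠ 0) : mergeLevel p ≤ p := Nat.pow_log_le_self 2 hp

theorem lt_two_mul_mergeLevel (p : ℕ) : p < 2 * mergeLevel p := by
  simpa [mergeLevel, pow_succ, mul_comm] using Nat.lt_pow_succ_log_self one_lt_two p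

theorem two_mul_mergeLevel_dvd {p k : ℕ} (hp : p ≠ 0) (hpk : p < 2 ^ k) :
    2 * mergeLevel p ∣ 2 ^ k := by
  rw [mergeLevel, ← pow_succ']
  exact pow_dvd_pow 2 (Nat.log_lt_of_lt_pow hp hpk)

/-- The forest on `[0, N)` when `p` merges remain, i.e. when there are `p + 1` paths: the
current level pairs up the paths modulo `2h`, `h = 2 ^ ⌊log₂ p⌋`, and has done `2h - 1 - p` of
its `h` merges. -/
def forestAt (N p : ℕ) : ℤ → Option ℤ :=
  pathForest N (mergeLevel p) (2 * mergeLevel p - 1 - p)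

theorem forestAt_eq_pathForest_succ (N p : ℕ) :
    forestAt N p =
      pathForest N (mergeLevel (p + 1)) (2 * mergeLevel (p + 1) - 1 - (p + 1) + 1) := by
  have hle : 2 ^ Nat.log 2 p ≤ p + 1 := Nat.pow_log_le_add_one 2 p
  have hlt := lt_two_mul_mergeLevel p
  rw [mergeLevel] at hlt
  rcases (Nat.succ_le_of_lt hlt).lt_or_eq with hsucc | hsucc
  · have hlog : Nat.log 2 (p + 1) = Nat.log 2 p :=
      Nat.log_eq_of_pow_le_of_lt_pow hle (by rwa [pow_succ, mul_comm])
    rw [forestAt, mergeLevel, mergeLevel, hlog]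
    congr 1
    omega
  · have hsucc : p + 1 = 2 * 2 ^ Nat.log 2 p := hsucc
    have hlog : Nat.log 2 (p + 1) = Nat.log 2 p + 1 := by
      rw [hsucc, ← pow_succ', Nat.log_pow one_lt_two]
    rw [forestAt, mergeLevel, mergeLevel, hlog, pow_succ',
      show 2 * 2 ^ Nat.log 2 p - 1 - p = 0 by omega,
      show 2 * (2 * 2 ^ Nat.log 2 p) - 1 - (p + 1) + 1 = 2 * 2 ^ Nat.log 2 p by omega,
      pathForest_two_mul_self]

theorem forestAt_pow_two_sub_one (k : ℕ) (x : ℤ) : forestAt (2 ^ k) (2 ^ k - 1) x = none := by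
  cases k with
  | zero =>
    simp only [forestAt, mergeLevel, pathForest, stepForest]
    split_ifs <;> simp_all
  | succ m =>
    have hpos := Nat.one_le_two_pow (n := m)
    have hlog : Nat.log 2 (2 ^ (m + 1) - 1) = m :=
      Nat.log_eq_of_pow_le_of_lt_pow (by rw [pow_succ]; omega) (by omega)
    have hj : 2 * 2 ^ m - 1 - (2 ^ (m + 1) - 1) = 0 := by rw [pow_succ]; omega
    have hx : ¬ x % ((2 ^ m : ℕ) : ℤ) < ((0 : ℕ) : ℤ) := by
      simpa using Int.emod_nonneg x (by positivity)
    simp only [forestAt, mergeLevel, pathForest, stepForest, hlog, hj, if_neg hx]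
    rw [if_neg (by push_cast [pow_succ]; omega)]

theorem sum_Ico_div_mergeLevel {N m : ℕ} (hN : 2 ^ m ∣ N) (hN0 : 0 < N) :
    ∑ q ∈ Ico 1 (2 ^ m), (N / mergeLevel q - 1) + 2 ^ m = m * N + 1 := by
  induction m with
  | zero => simp
  | succ m ih =>
    have hblock : ∀ q ∈ Ico (2 ^ m) (2 ^ (m + 1)), N / mergeLevel q - 1 = N / 2 ^ m - 1 :=
      fun q hq => by
        rw [mergeLevel, Nat.log_eq_of_pow_le_of_lt_pow (mem_Ico.mp hq).1 (mem_Ico.mp hq).2]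
    have hdvd : 2 ^ m ∣ N := (pow_dvd_pow 2 m.le_succ).trans hN
    have hmul : 2 ^ m * (N / 2 ^ m) = N := Nat.mul_div_cancel' hdvd
    have hle : 2 ^ m ≤ N := Nat.le_of_dvd hN0 hdvd
    have := ih hdvd
    rw [← sum_Ico_consecutive _ Nat.one_le_two_pow (Nat.pow_le_pow_right two_pos m.le_succ),
      sum_congr rfl hblock, sum_const, Nat.card_Ico, smul_eq_mul, pow_succ,
      show 2 ^ m * 2 - 2 ^ m = 2 ^ m by omega, Nat.mul_sub_one, hmul, add_mul, one_mul]
    omega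

section Schedule

variable {k i : ℕ} (hi : i < 2 ^ k - 1)
include hi

theorem mergeStep_forestAt :
    MergeStep (forestAt (2 ^ k) (2 ^ k - 1 - i)) (forestAt (2 ^ k) (2 ^ k - 1 - (i + 1)))
      i (i + mergeLevel (2 ^ k - 1 - i)) := by
  obtain ⟨p, hp⟩ : ∃ p, 2 ^ k - 1 - i = p + 1 := ⟨2 ^ k - 1 - (i + 1), by omega⟩
  rw [hp, show 2 ^ k - 1 - (i + 1) = p by omega, forestAt_eq_pathForest_succ (2 ^ k) p]
  have hle := mergeLevel_le (show p + 1 ≠ 0 by omega)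
  have hlt := lt_two_mul_mergeLevel (p + 1)
  have hstep := mergeStep_pathForest (N := 2 ^ k) (j := 2 * mergeLevel (p + 1) - 1 - (p + 1))
    (by unfold mergeLevel; positivity) (by omega)
    (two_mul_mergeLevel_dvd (show p + 1 ≠ 0 by omega) (by omega)) (by positivity)
  have hN : ((2 ^ k : ℕ) : ℤ) = i + p + 2 := by
    rw [show 2 ^ k = i + p + 2 by omega]
    push_cast
    ring
  convert hstep using 1 <;> first | rfl | omega

theorem card_forestAt_changes :
    2 ^ k / mergeLevel (2 ^ k - 1 - i) - 1 ≤ #{x ∈ Ico (0 : ℤ) (2 ^ k : ℕ) |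
      forestAt (2 ^ k) (2 ^ k - 1 - (i + 1)) x ≠ forestAt (2 ^ k) (2 ^ k - 1 - i) x} := by
  obtain ⟨p, hp⟩ : ∃ p, 2 ^ k - 1 - i = p + 1 := ⟨2 ^ k - 1 - (i + 1), by omega⟩
  rw [hp, show 2 ^ k - 1 - (i + 1) = p by omega, forestAt_eq_pathForest_succ (2 ^ k) p,
    forestAt]
  have hle := mergeLevel_le (show p + 1 ≠ 0 by omega)
  have hlt := lt_two_mul_mergeLevel (p + 1)
  exact card_pathForest_changes (by unfold mergeLevel; positivity) (by omega)

end Schedule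

theorem sum_Ico_reflect_pow_two (k : ℕ) (f : ℕ → ℕ) :
    ∑ i ∈ range (2 ^ k - 1), f (2 ^ k - 1 - i) = ∑ q ∈ Ico 1 (2 ^ k), f q := by
  rw [range_eq_Ico, sum_Ico_reflect _ 0 (Nat.le_succ _),
    show 2 ^ k - 1 + 1 - (2 ^ k - 1) = 1 by omega, Nat.sub_add_cancel Nat.one_le_two_pow,
    Nat.sub_zero]

theorem exists_merge_sequence_many_parent_changes_general (k : ℕ) :
    ∃ (V : Finset ℤ) (F : ℕ → ℤ → Option ℤ) (v w : ℕ → ℤ),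
      V.card = 2 ^ k ∧
      (∀ x : ℤ, F 0 x = none) ∧
      (∀ i, ∀ x b : ℤ, F i x = some b → x ∈ V ∧ b ∈ V) ∧
      (∀ i < 2 ^ k - 1, v i ∈ V ∧ w i ∈ V ∧
        MergeStep (F i) (F (i + 1)) (v i) (w i)) ∧
      (2 ^ k / 2) * k - 2 ^ k ≤
        ∑ i ∈ Finset.range (2 ^ k - 1),
          (V.filter (fun x => F (i + 1) x ≠ F i x)).card := by
  refine ⟨Ico 0 (2 ^ k : ℕ), fun i => forestAt (2 ^ k) (2 ^ k - 1 - i), fun i => i,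
    fun i => i + mergeLevel (2 ^ k - 1 - i), by rw [Int.card_Ico, sub_zero, Int.toNat_natCast],
    forestAt_pow_two_sub_one k,
    fun i x b hxb => ?_, fun i hi => ⟨?_, ?_, mergeStep_forestAt hi⟩, ?_⟩
  · obtain ⟨hx, hb⟩ := pathForest_mem hxb
    exact ⟨mem_Ico.mpr hx, mem_Ico.mpr hb⟩
  · exact mem_Ico.mpr ⟨Int.natCast_nonneg _, Nat.cast_lt.mpr (by omega)⟩
  · have := mergeLevel_le (show 2 ^ k - 1 - i ≠ 0 by omega)
    exact mem_Ico.mpr ⟨Int.natCast_nonneg _, Nat.cast_lt.mpr (by omega)⟩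
  have hsum := sum_Ico_div_mergeLevel (N := 2 ^ k) dvd_rfl (by positivity)
  rw [← sum_Ico_reflect_pow_two] at hsum
  calc 2 ^ k / 2 * k - 2 ^ k ≤ k * 2 ^ k + 1 - 2 ^ k := by
        have := Nat.mul_le_mul_right k (Nat.div_le_self (2 ^ k) 2)
        rw [mul_comm k]
        omega
    _ = ∑ i ∈ range (2 ^ k - 1), (2 ^ k / mergeLevel (2 ^ k - 1 - i) - 1) := by
        omega
    _ ≤ _ := sum_le_sum fun i hi => card_forestAt_changes (mem_range.mp hi)

/-- There is a sequence of `n − 1 = 2^k − 1` merges starting from `n = 2^k`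
single-node trees (no cuts) whose total number of parent changes is at least
`(n/2)·k − n = Ω(n log n)`: merge the paths in pairs with perfect interleaving
at each of the `k` levels. -/
theorem exists_merge_sequence_many_parent_changes (k : ℕ) (hk : 1 ≤ k) :
    ∃ (V : Finset ℤ) (F : ℕ → ℤ → Option ℤ) (v w : ℕ → ℤ),
      V.card = 2 ^ k ∧
      (∀ x : ℤ, F 0 x = none) ∧
      (∀ i, ∀ x b : ℤ, F i x = some b → x ∈ V ∧ b ∈ V) ∧
      (∀ i < 2 ^ k - 1, v i ∈ V ∧ w i ∈ V ∧
        MergeStep (F i) (F (i + 1)) (v i) (w i)) ∧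
      (2 ^ k / 2) * k - 2 ^ k ≤
        ∑ i ∈ Finset.range (2 ^ k - 1),
          (V.filter (fun x => F (i + 1) x ≠ F i x)).card :=
  exists_merge_sequence_many_parent_changes_general k
end

section
/- Boolean union-find reduces to mergeable trees without cuts or parent queries: if each set is maintained as a heap-ordered path whose nodes are its elements, then (a) merging two disjoint paths yields the heap-ordered path on the union of their elements, so unite is a single merge; and (b) for elements x and y, x and y are in the same set if and only if root(x) = root(y), where root returns the minimum element of the path, equivalently iff nca(x,y) ≠ null. -/
/-!
A set `S` stored as a heap-ordered path is the chain `max S → … → min S` in which every element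
points to the next smaller element of `S`. Following parent pointers therefore stays inside `S` and
never increases, while conversely every smaller element of `S` is reached by finitely many steps.
So the ancestors of `max S` are exactly `S`, which makes `merge (max A) (max B)` rebuild the sorted
path on `A ∪ B`; the root of every element of `S` is `min S`, and any two elements of `S` have
their minimum as nearest common ancestor. Elements of disjoint sets have no common ancestor at all.
-/

def IsSortedPath (p : ℤ → Option ℤ) (S : Finset ℤ) : Prop :=
  ∀ x ∈ S, ∀ b : ℤ, p x = some b ↔ (b ∈ S ∧ b < x ∧ ∀ z ∈ S, z < x → z ≤ b)

lemma MergeStep.isSortedPath {p q : ℤ → Option ℤ} {v w : ℤ} {S : Finset ℤ}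
    (h : MergeStep p q v w) (hS : ∀ z, anc p v z ∨ anc p w z ↔ z ∈ S) : IsSortedPath q S := by
  intro x hx b
  simp only [(h.2 x ((hS x).2 hx)).1 b, hS]

namespace IsSortedPath

variable {p : ℤ → Option ℤ} {S : Finset ℤ}

lemma parent_eq_max' (hp : IsSortedPath p S) {x : ℤ} (hx : x ∈ S)
    (hlt : (S.filter (· < x)).Nonempty) : p x = some ((S.filter (· < x)).max' hlt) := by
  have hmem := Finset.mem_filter.1 ((S.filter (· < x)).max'_mem hlt)
  exact (hp x hx _).2 ⟨hmem.1, hmem.2, fun z hz hzx =>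
    (S.filter (· < x)).le_max' z (Finset.mem_filter.2 ⟨hz, hzx⟩)⟩

lemma mem_and_le_of_anc (hp : IsSortedPath p S) {x z : ℤ} (hx : x ∈ S) (hxz : anc p x z) :
    z ∈ S ∧ z ≤ x := by
  induction hxz with
  | refl => exact ⟨hx, le_rfl⟩
  | tail _ hbc ih =>
    obtain ⟨hc, hcb, -⟩ := (hp _ ih.1 _).1 hbc
    exact ⟨hc, hcb.le.trans ih.2⟩

lemma anc_of_le (hp : IsSortedPath p S) {x y : ℤ} (hx : x ∈ S) (hy : y ∈ S) (hyx : y ≤ x) :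
    anc p x y := by
  induction hn : (x - y).toNat using Nat.strong_induction_on generalizing x with
  | _ n ih =>
    obtain rfl | hlt := hyx.eq_or_lt
    · exact .refl
    have hne : (S.filter (· < x)).Nonempty := ⟨y, Finset.mem_filter.2 ⟨hy, hlt⟩⟩
    have hb := Finset.mem_filter.1 ((S.filter (· < x)).max'_mem hne)
    have hyb : y ≤ (S.filter (· < x)).max' hne :=
      (S.filter (· < x)).le_max' y (Finset.mem_filter.2 ⟨hy, hlt⟩)
    exact .head (hp.parent_eq_max' hx hne) (ih _ (by omega) hb.1 hyb rfl)

lemma anc_max'_iff (hp : IsSortedPath p S) (hS : S.Nonempty) {z : ℤ} :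
    anc p (S.max' hS) z ↔ z ∈ S :=
  ⟨fun h => (hp.mem_and_le_of_anc (S.max'_mem hS) h).1,
    fun hz => hp.anc_of_le (S.max'_mem hS) hz (S.le_max' z hz)⟩

lemma root_eq_min' (hp : IsSortedPath p S) (hS : S.Nonempty) {x r : ℤ} (hx : x ∈ S)
    (hxr : anc p x r) (hr : p r = none) : r = S.min' hS := by
  have hrS := (hp.mem_and_le_of_anc hx hxr).1
  by_contra hne
  have hlt : (S.filter (· < r)).Nonempty :=
    ⟨S.min' hS, Finset.mem_filter.2 ⟨S.min'_mem hS, (S.min'_le r hrS).lt_of_ne' hne⟩⟩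
  simp [hp.parent_eq_max' hrS hlt] at hr

lemma isNca_min (hp : IsSortedPath p S) {x y : ℤ} (hx : x ∈ S) (hy : y ∈ S) :
    IsNca p x y (min x y) := by
  have hmin : min x y ∈ S := by rcases min_choice x y with h | h <;> rw [h] <;> assumption
  refine ⟨hp.anc_of_le hx hmin (min_le_left x y), hp.anc_of_le hy hmin (min_le_right x y),
    fun z hxz hyz => ?_⟩
  obtain ⟨hz, hzx⟩ := hp.mem_and_le_of_anc hx hxz
  exact hp.anc_of_le hmin hz (le_min hzx (hp.mem_and_le_of_anc hy hyz).2)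

lemma same_set_of_anc_of_anc {T : Finset ℤ} (hpS : IsSortedPath p S) (hpT : IsSortedPath p T)
    (hdisj : Disjoint S T) {x y u : ℤ} (hx : x ∈ S ∪ T) (hy : y ∈ S ∪ T)
    (hxu : anc p x u) (hyu : anc p y u) : (x ∈ S ∧ y ∈ S) ∨ (x ∈ T ∧ y ∈ T) := by
  rcases Finset.mem_union.1 hx with hx | hx <;> rcases Finset.mem_union.1 hy with hy | hy
  · exact .inl ⟨hx, hy⟩
  · exact (Finset.disjoint_left.1 hdisj (hpS.mem_and_le_of_anc hx hxu).1
      (hpT.mem_and_le_of_anc hy hyu).1).elim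
  · exact (Finset.disjoint_left.1 hdisj (hpS.mem_and_le_of_anc hy hyu).1
      (hpT.mem_and_le_of_anc hx hxu).1).elim
  · exact .inr ⟨hx, hy⟩

end IsSortedPath

theorem union_find_reduction_general (A B : Finset ℤ) (hA : A.Nonempty) (hB : B.Nonempty)
    (hdisj : Disjoint A B) (p q : ℤ → Option ℤ)
    (hpA : ∀ x ∈ A, ∀ b : ℤ, p x = some b ↔ (b ∈ A ∧ b < x ∧ ∀ z ∈ A, z < x → z ≤ b))
    (hpB : ∀ x ∈ B, ∀ b : ℤ, p x = some b ↔ (b ∈ B ∧ b < x ∧ ∀ z ∈ B, z < x → z ≤ b))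
    (hmerge : MergeStep p q (A.max' hA) (B.max' hB)) :
    (∀ x ∈ A ∪ B, ∀ b : ℤ,
        q x = some b ↔ (b ∈ A ∪ B ∧ b < x ∧ ∀ z ∈ A ∪ B, z < x → z ≤ b)) ∧
    (∀ x ∈ A ∪ B, ∀ y ∈ A ∪ B, ∀ rx ry : ℤ,
        anc p x rx → p rx = none → anc p y ry → p ry = none →
        ((rx = ry ↔ ((x ∈ A ∧ y ∈ A) ∨ (x ∈ B ∧ y ∈ B))) ∧
         (x ∈ A → rx = A.min' hA) ∧ (x ∈ B → rx = B.min' hB) ∧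
         ((∃ u : ℤ, IsNca p x y u) ↔ ((x ∈ A ∧ y ∈ A) ∨ (x ∈ B ∧ y ∈ B))))) := by
  have hpA : IsSortedPath p A := hpA
  have hpB : IsSortedPath p B := hpB
  refine ⟨hmerge.isSortedPath fun z => by
    simp only [hpA.anc_max'_iff, hpB.anc_max'_iff, Finset.mem_union], ?_⟩
  intro x hx y hy rx ry hxrx hrx hyry hry
  have same_set_of_anc {u : ℤ} : anc p x u → anc p y u → (x ∈ A ∧ y ∈ A) ∨ (x ∈ B ∧ y ∈ B) :=
    hpA.same_set_of_anc_of_anc hpB hdisj hx hy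
  refine ⟨⟨fun h => same_set_of_anc hxrx (h ▸ hyry), ?_⟩,
    fun hxA => hpA.root_eq_min' hA hxA hxrx hrx, fun hxB => hpB.root_eq_min' hB hxB hxrx hrx,
    fun ⟨u, hxu, hyu, _⟩ => same_set_of_anc hxu hyu, ?_⟩
  · rintro (⟨hxA, hyA⟩ | ⟨hxB, hyB⟩)
    · rw [hpA.root_eq_min' hA hxA hxrx hrx, hpA.root_eq_min' hA hyA hyry hry]
    · rw [hpB.root_eq_min' hB hxB hxrx hrx, hpB.root_eq_min' hB hyB hyry hry]
  · rintro (⟨hxA, hyA⟩ | ⟨hxB, hyB⟩)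
    · exact ⟨_, hpA.isNca_min hxA hyA⟩
    · exact ⟨_, hpB.isNca_min hxB hyB⟩

/-- Boolean union-find reduces to mergeable trees without cuts or parent queries.
Maintain each set as a heap-ordered path (each node's parent is the greatest
smaller element of the set).  If `p` represents two disjoint sets `A` and `B` as
such sorted paths, then: (a) merging at the maxima (the set identifiers) yields
the heap-ordered sorted path on `A ∪ B`, so `unite` is a single merge; and (b) two
elements are in the same set iff their roots coincide, the root of an element
being the minimum of its set, equivalently iff their nca exists (is not null). -/
theorem union_find_reduction (A B : Finset ℤ) (hA : A.Nonempty) (hB : B.Nonempty)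
    (hdisj : Disjoint A B) (p q : ℤ → Option ℤ)
    (hpA : ∀ x ∈ A, ∀ b : ℤ, p x = some b ↔ (b ∈ A ∧ b < x ∧ ∀ z ∈ A, z < x → z ≤ b))
    (hpB : ∀ x ∈ B, ∀ b : ℤ, p x = some b ↔ (b ∈ B ∧ b < x ∧ ∀ z ∈ B, z < x → z ≤ b))
    (hpout : ∀ x : ℤ, x ∉ A → x ∉ B → p x = none)
    (hmerge : MergeStep p q (A.max' hA) (B.max' hB)) :
    (∀ x ∈ A ∪ B, ∀ b : ℤ,
        q x = some b ↔ (b ∈ A ∪ B ∧ b < x ∧ ∀ z ∈ A ∪ B, z < x → z ≤ b)) ∧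
    (∀ x ∈ A ∪ B, ∀ y ∈ A ∪ B, ∀ rx ry : ℤ,
        anc p x rx → p rx = none → anc p y ry → p ry = none →
        ((rx = ry ↔ ((x ∈ A ∧ y ∈ A) ∨ (x ∈ B ∧ y ∈ B))) ∧
         (x ∈ A → rx = A.min' hA) ∧ (x ∈ B → rx = B.min' hB) ∧
         ((∃ u : ℤ, IsNca p x y u) ↔ ((x ∈ A ∧ y ∈ A) ∨ (x ∈ B ∧ y ∈ B))))) :=
  union_find_reduction_general A B hA hB hdisj p q hpA hpB hmerge
end
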